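/- arXiv:2006.02532 — 3 statements merged into one kernel-verified Lean document; each statement's English description precedes it below -/
import Mathlib

section
/- Let (N, μ) be a measure space with μ(N) < ∞ and let b : ι → L²(N, μ; ℝ) be a Hilbert basis (orthonormal basis) of the real Hilbert space L²(N, μ; ℝ). Let (M, d) be a metric space, let c, λ, δ ≥ 0, and let φ : M → ℝ be Lipschitz with constant c·λ. Let T1, T2 : N → M be maps that are δ-close (d(T1 x, T2 x) ≤ δ for all x ∈ N) and such that the function x ↦ φ(T1 x) − φ(T2 x) is measurable; let g ∈ L²(N, μ; ℝ) denote its almost-everywhere equivalence class (which lies in L² since it is bounded by δ·c·λ on a finite measure space). Then ∑'_{j∈ι} ⟪b j, g⟫² ≤ (δ·c·λ)² · μ(N). -/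
open MeasureTheory

theorem HilbertBasis.tsum_inner_sq_eq_norm_sq {ι E : Type*} [NormedAddCommGroup E]
    [InnerProductSpace ℝ E] (b : HilbertBasis ι ℝ E) (x : E) :
    ∑' j, inner ℝ (b j) x ^ 2 = ‖x‖ ^ 2 := by
  rw [← real_inner_self_eq_norm_sq, ← b.tsum_inner_mul_inner x x]
  exact tsum_congr fun j => by rw [real_inner_comm x, sq]

theorem MeasureTheory.Lp.norm_sq_le_of_ae_bound {N E : Type*} [MeasurableSpace N]
    [NormedAddCommGroup E] {μ : Measure N} [IsFiniteMeasure μ] {f : Lp E 2 μ} {C : ℝ}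
    (hC : 0 ≤ C) (hfC : ∀ᵐ x ∂μ, ‖f x‖ ≤ C) :
    ‖f‖ ^ 2 ≤ C ^ 2 * (μ Set.univ).toReal := by
  have hvol :
      ((measureUnivNNReal μ : ℝ) ^ (2 : ENNReal).toReal⁻¹) ^ 2 = (μ Set.univ).toReal := by
    rw [← Real.rpow_natCast, ← Real.rpow_mul (NNReal.coe_nonneg _)]
    norm_num [measureUnivNNReal, ENNReal.coe_toNNReal_eq_toReal]
  calc ‖f‖ ^ 2 ≤ ((measureUnivNNReal μ : ℝ) ^ (2 : ENNReal).toReal⁻¹ * C) ^ 2 := by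
        gcongr; exact Lp.norm_le_of_ae_bound hC hfC
    _ = C ^ 2 * (μ Set.univ).toReal := by rw [mul_pow, hvol, mul_comm]

theorem dist_comp_le_abs_mul_of_dist_le {M : Type*} [PseudoMetricSpace M] {φ : M → ℝ}
    {K δ : ℝ} (hφ : ∀ x y, dist (φ x) (φ y) ≤ K * dist x y) {a b : M}
    (hab : dist a b ≤ δ) :
    dist (φ a) (φ b) ≤ |K * δ| :=
  calc dist (φ a) (φ b) ≤ K * dist a b := hφ a b
    _ ≤ |K| * dist a b := by gcongr; exact le_abs_self K
    _ ≤ |K| * |δ| := by gcongr; exact hab.trans (le_abs_self δ)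
    _ = |K * δ| := (abs_mul K δ).symm

theorem tsum_inner_sq_le_of_lipschitz_of_close_general
    {N : Type*} [MeasurableSpace N] (μ : Measure N) [IsFiniteMeasure μ]
    {ι : Type*} (b : HilbertBasis ι ℝ (Lp ℝ 2 μ))
    {M : Type*} [MetricSpace M] (c lam δ : ℝ)
    (φ : M → ℝ) (hφ : ∀ x y, dist (φ x) (φ y) ≤ c * lam * dist x y)
    (T1 T2 : N → M) (hclose : ∀ x, dist (T1 x) (T2 x) ≤ δ)
    (g : Lp ℝ 2 μ) (hg : (g : N → ℝ) =ᵐ[μ] fun x => φ (T1 x) - φ (T2 x)) :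
    ∑' j : ι, (inner ℝ (b j) g : ℝ) ^ 2 ≤ (δ * c * lam) ^ 2 * (μ Set.univ).toReal := by
  have hbound : ∀ᵐ x ∂μ, ‖(g : N → ℝ) x‖ ≤ |c * lam * δ| := by
    filter_upwards [hg] with x hx
    rw [hx, ← dist_eq_norm]
    exact dist_comp_le_abs_mul_of_dist_le hφ (hclose x)
  calc ∑' j, inner ℝ (b j) g ^ 2 = ‖g‖ ^ 2 := b.tsum_inner_sq_eq_norm_sq g
    _ ≤ |c * lam * δ| ^ 2 * (μ Set.univ).toReal :=
      Lp.norm_sq_le_of_ae_bound (abs_nonneg _) hbound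
    _ = (δ * c * lam) ^ 2 * (μ Set.univ).toReal := by rw [sq_abs]; ring

/-- Theorem 1 of the paper: if `T1, T2 : N → M` are `δ`-close and `φ : M → ℝ` is Lipschitz
with constant `c·λ` (abstracting the eigenfunction gradient bound), then the coefficients of
the class `g` of `x ↦ φ(T1 x) − φ(T2 x)` in any Hilbert basis of `L²(N, μ; ℝ)` satisfy
`∑' j, ⟪b j, g⟫² ≤ (δ·c·λ)² · μ(N)`. -/
theorem tsum_inner_sq_le_of_lipschitz_of_close
    {N : Type*} [MeasurableSpace N] (μ : Measure N) [IsFiniteMeasure μ]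
    {ι : Type*} (b : HilbertBasis ι ℝ (Lp ℝ 2 μ))
    {M : Type*} [MetricSpace M] (c lam δ : ℝ) (hc : 0 ≤ c) (hlam : 0 ≤ lam) (hδ : 0 ≤ δ)
    (φ : M → ℝ) (hφ : ∀ x y, dist (φ x) (φ y) ≤ c * lam * dist x y)
    (T1 T2 : N → M) (hclose : ∀ x, dist (T1 x) (T2 x) ≤ δ)
    (hmeas : Measurable fun x => φ (T1 x) - φ (T2 x))
    (g : Lp ℝ 2 μ) (hg : (g : N → ℝ) =ᵐ[μ] fun x => φ (T1 x) - φ (T2 x)) :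
    ∑' j : ι, (inner ℝ (b j) g : ℝ) ^ 2 ≤ (δ * c * lam) ^ 2 * (μ Set.univ).toReal :=
  tsum_inner_sq_le_of_lipschitz_of_close_general μ b c lam δ φ hφ T1 T2 hclose g hg
end

section
/- Let H and K be real Hilbert spaces, let S1, S2 : H → K be linear isometries, and let Q : H → H and P : K → K be the orthogonal projections onto complete subspaces of H and K respectively. Let f ∈ H and ε, δ ≥ 0 satisfy ‖f − Q f‖ ≤ √ε · ‖f‖, and set g = S1 f − S2 f with ‖g − P g‖ ≤ √δ · ‖g‖. Then ‖P(S1(Q f) − S2(Q f))‖ ≥ (1 − √δ)·‖g‖ − 2·√ε·‖f‖. -/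
/-!
Replacing `f` by `Q f` moves `g = S1 f - S2 f` by at most `2 ‖f - Q f‖ ≤ 2 √ε ‖f‖`, since
`S1 - S2` is `2`-Lipschitz. As `P` is `1`-Lipschitz and `‖P g‖ ≥ ‖g‖ - ‖g - P g‖ ≥ (1 - √δ) ‖g‖`,
the projection of the moved vector keeps norm at least `(1 - √δ) ‖g‖ - 2 √ε ‖f‖`.
-/

theorem LinearIsometry.norm_sub_apply_sub_le {R E F : Type*} [Ring R]
    [SeminormedAddCommGroup E] [SeminormedAddCommGroup F] [Module R E] [Module R F]
    (S₁ S₂ : E →ₗᵢ[R] F) (x y : E) :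
    ‖(S₁ x - S₂ x) - (S₁ y - S₂ y)‖ ≤ 2 * ‖x - y‖ :=
  calc ‖(S₁ x - S₂ x) - (S₁ y - S₂ y)‖ = ‖S₁ (x - y) - S₂ (x - y)‖ := by
        rw [map_sub, map_sub]; abel_nf
    _ ≤ ‖S₁ (x - y)‖ + ‖S₂ (x - y)‖ := norm_sub_le _ _
    _ = 2 * ‖x - y‖ := by rw [S₁.norm_map, S₂.norm_map, two_mul]

theorem Submodule.one_sub_mul_norm_sub_le_norm_orthogonalProjectionOnto {𝕜 E : Type*} [RCLike 𝕜]
    [NormedAddCommGroup E] [InnerProductSpace 𝕜 E] (K : Submodule 𝕜 E) [K.HasOrthogonalProjection]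
    {x y : E} {c r : ℝ} (hx : ‖x - K.orthogonalProjectionOnto x‖ ≤ c * ‖x‖) (hxy : ‖x - y‖ ≤ r) :
    (1 - c) * ‖x‖ - r ≤ ‖(K.orthogonalProjectionOnto y : E)‖ := by
  have hPx : ‖x‖ - ‖x - K.orthogonalProjectionOnto x‖ ≤ ‖(K.orthogonalProjectionOnto x : E)‖ := by
    simpa using norm_sub_norm_le x (x - K.orthogonalProjectionOnto x)
  have hPxy : ‖(K.orthogonalProjectionOnto x : E)‖ - ‖(K.orthogonalProjectionOnto y : E)‖ ≤ ‖x - y‖ :=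
    calc _ ≤ ‖(K.orthogonalProjectionOnto x : E) - K.orthogonalProjectionOnto y‖ :=
          norm_sub_norm_le _ _
      _ = ‖K.orthogonalProjectionOnto (x - y)‖ := by rw [map_sub]; rfl
      _ ≤ ‖x - y‖ := K.norm_orthogonalProjectionOnto_apply_le _
  linarith

theorem norm_proj_sub_ge_of_isometries_general
    {H K : Type*} [NormedAddCommGroup H] [InnerProductSpace ℝ H]
    [NormedAddCommGroup K] [InnerProductSpace ℝ K]
    (S1 S2 : H →ₗᵢ[ℝ] K)
    (U : Submodule ℝ H) (V : Submodule ℝ K) [CompleteSpace U] [CompleteSpace V]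
    (f : H) (ε δ : ℝ)
    (hf : ‖f - (Submodule.orthogonalProjectionOnto U f : H)‖ ≤ Real.sqrt ε * ‖f‖)
    (g : K) (hgdef : g = S1 f - S2 f)
    (hg : ‖g - (Submodule.orthogonalProjectionOnto V g : K)‖ ≤ Real.sqrt δ * ‖g‖) :
    ‖(Submodule.orthogonalProjectionOnto V
        (S1 (Submodule.orthogonalProjectionOnto U f : H) - S2 (Submodule.orthogonalProjectionOnto U f : H)) : K)‖
      ≥ (1 - Real.sqrt δ) * ‖g‖ - 2 * Real.sqrt ε * ‖f‖ := by
  have hmove : ‖g - (S1 (U.orthogonalProjectionOnto f : H) - S2 (U.orthogonalProjectionOnto f : H))‖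
      ≤ 2 * Real.sqrt ε * ‖f‖ := by
    rw [hgdef, mul_assoc]
    exact (S1.norm_sub_apply_sub_le S2 _ _).trans (by gcongr)
  exact V.one_sub_mul_norm_sub_le_norm_orthogonalProjectionOnto hg hmove

/-- Abstract Hilbert-space form of the key inequality of Appendix B: if `S1, S2` are linear
isometries, `Q`, `P` are orthogonal projections onto complete subspaces, `f` is well captured
by `Q` up to relative error `√ε`, and `g = S1 f − S2 f` is well captured by `P` up to relative
error `√δ`, then `‖P (S1 (Q f) − S2 (Q f))‖ ≥ (1 − √δ)·‖g‖ − 2√ε·‖f‖`. -/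
theorem norm_proj_sub_ge_of_isometries
    {H K : Type*} [NormedAddCommGroup H] [InnerProductSpace ℝ H]
    [NormedAddCommGroup K] [InnerProductSpace ℝ K]
    (S1 S2 : H →ₗᵢ[ℝ] K)
    (U : Submodule ℝ H) (V : Submodule ℝ K) [CompleteSpace U] [CompleteSpace V]
    (f : H) (ε δ : ℝ) (hε : 0 ≤ ε) (hδ : 0 ≤ δ)
    (hf : ‖f - (Submodule.orthogonalProjectionOnto U f : H)‖ ≤ Real.sqrt ε * ‖f‖)
    (g : K) (hgdef : g = S1 f - S2 f)
    (hg : ‖g - (Submodule.orthogonalProjectionOnto V g : K)‖ ≤ Real.sqrt δ * ‖g‖) :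
    ‖(Submodule.orthogonalProjectionOnto V
        (S1 (Submodule.orthogonalProjectionOnto U f : H) - S2 (Submodule.orthogonalProjectionOnto U f : H)) : K)‖
      ≥ (1 - Real.sqrt δ) * ‖g‖ - 2 * Real.sqrt ε * ‖f‖ :=
  norm_proj_sub_ge_of_isometries_general S1 S2 U V f ε δ hf g hgdef hg
end

section
/- Let H and K be real Hilbert spaces, let S1, S2 : H → K be linear isometries, and let Q : H → H and P : K → K be the orthogonal projections onto complete subspaces of H and K respectively. Let f ∈ H with f ≠ 0 and let ε, δ ≥ 0 satisfy ‖f − Q f‖ ≤ √ε · ‖f‖; set g = S1 f − S2 f and assume ‖g − P g‖ ≤ √δ · ‖g‖. Then the operator norm of the composition P ∘ (S1 − S2) ∘ Q (as a bounded linear map from H to K) satisfies ‖P ∘ (S1 − S2) ∘ Q‖ ≥ (1 − √δ)·‖g‖/‖f‖ − 2·√ε. -/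
open MeasureTheory

/-
Write `q = Q f`. Since `T = P (S1 - S2) Q` satisfies `T f = P (S1 q - S2 q)` and `P` is
`1`-Lipschitz, `‖T f‖ ≥ ‖P g‖ - ‖(S1 - S2) (f - q)‖`. Here `‖P g‖ ≥ (1 - √δ) ‖g‖`, while the
difference of two isometries has norm at most `2`, so `‖(S1 - S2) (f - q)‖ ≤ 2 √ε ‖f‖`.
Dividing by `‖f‖` and using `‖T f‖ ≤ ‖T‖ ‖f‖` gives the bound.
-/

lemma LinearIsometry.norm_sub_apply_le {R E F : Type*} [Semiring R]
    [SeminormedAddCommGroup E] [SeminormedAddCommGroup F] [Module R E] [Module R F]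
    (S₁ S₂ : E →ₗᵢ[R] F) (x : E) : ‖S₁ x - S₂ x‖ ≤ 2 * ‖x‖ :=
  calc ‖S₁ x - S₂ x‖ ≤ ‖S₁ x‖ + ‖S₂ x‖ := norm_sub_le _ _
    _ = 2 * ‖x‖ := by rw [S₁.norm_map, S₂.norm_map, two_mul]

lemma one_sub_mul_norm_le_of_norm_sub_le {E : Type*} [SeminormedAddCommGroup E] {x y : E}
    {c : ℝ} (h : ‖x - y‖ ≤ c * ‖x‖) : (1 - c) * ‖x‖ ≤ ‖y‖ := by
  linarith [norm_sub_norm_le x y]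

lemma Submodule.norm_starProjection_apply_sub_le {𝕜 E : Type*} [RCLike 𝕜]
    [NormedAddCommGroup E] [InnerProductSpace 𝕜 E] (V : Submodule 𝕜 E)
    [V.HasOrthogonalProjection] (x y : E) :
    ‖V.starProjection x‖ - ‖x - y‖ ≤ ‖V.starProjection y‖ := by
  have h := V.norm_starProjection_apply_le (x - y)
  rw [map_sub] at h
  linarith [norm_sub_norm_le (V.starProjection x) (V.starProjection y)]

theorem opNorm_proj_comp_sub_ge_general
    {H K : Type*} [NormedAddCommGroup H] [InnerProductSpace ℝ H]
    [NormedAddCommGroup K] [InnerProductSpace ℝ K]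
    (S1 S2 : H →ₗᵢ[ℝ] K)
    (U : Submodule ℝ H) (V : Submodule ℝ K) [CompleteSpace U] [CompleteSpace V]
    (f : H) (hf0 : f ≠ 0) (ε δ : ℝ)
    (hf : ‖f - (U.orthogonalProjectionOnto f : H)‖ ≤ Real.sqrt ε * ‖f‖)
    (g : K) (hgdef : g = S1 f - S2 f)
    (hg : ‖g - (V.orthogonalProjectionOnto g : K)‖ ≤ Real.sqrt δ * ‖g‖) :
    ‖(V.subtypeL.comp V.orthogonalProjectionOnto).comp
        ((S1.toContinuousLinearMap - S2.toContinuousLinearMap).comp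
          (U.subtypeL.comp U.orthogonalProjectionOnto))‖
      ≥ (1 - Real.sqrt δ) * ‖g‖ / ‖f‖ - 2 * Real.sqrt ε := by
  set T := (V.subtypeL.comp V.orthogonalProjectionOnto).comp
    ((S1.toContinuousLinearMap - S2.toContinuousLinearMap).comp
      (U.subtypeL.comp U.orthogonalProjectionOnto))
  set q := U.starProjection f
  have hTf : T f = V.starProjection (S1 q - S2 q) := rfl
  have hgq : g - (S1 q - S2 q) = S1 (f - q) - S2 (f - q) := by
    rw [hgdef, map_sub, map_sub]; abel
  have hTf_ge : (1 - Real.sqrt δ) * ‖g‖ - 2 * (Real.sqrt ε * ‖f‖) ≤ ‖T f‖ :=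
    calc (1 - Real.sqrt δ) * ‖g‖ - 2 * (Real.sqrt ε * ‖f‖)
        ≤ ‖V.starProjection g‖ - 2 * ‖f - q‖ := by
          gcongr
          · exact one_sub_mul_norm_le_of_norm_sub_le hg
          · exact hf
      _ ≤ ‖V.starProjection g‖ - ‖g - (S1 q - S2 q)‖ := by
          rw [hgq]; gcongr; exact S1.norm_sub_apply_le S2 _
      _ ≤ ‖T f‖ := hTf ▸ V.norm_starProjection_apply_sub_le _ _
  rw [ge_iff_le, sub_le_iff_le_add, div_le_iff₀ (norm_pos_iff.mpr hf0)]
  linarith [T.le_opNorm f]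

/-- Abstract Hilbert-space form of the lower bound of Appendix B: under the hypotheses of the
key inequality, the compressed operator `P ∘ (S1 − S2) ∘ Q` (the difference of the leading
principal functional map submatrices) has operator norm at least
`(1 − √δ)·‖g‖/‖f‖ − 2√ε`. -/
theorem opNorm_proj_comp_sub_ge
    {H K : Type*} [NormedAddCommGroup H] [InnerProductSpace ℝ H]
    [NormedAddCommGroup K] [InnerProductSpace ℝ K]
    (S1 S2 : H →ₗᵢ[ℝ] K)
    (U : Submodule ℝ H) (V : Submodule ℝ K) [CompleteSpace U] [CompleteSpace V]
    (f : H) (hf0 : f ≠ 0) (ε δ : ℝ) (hε : 0 ≤ ε) (hδ : 0 ≤ δ)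
    (hf : ‖f - (U.orthogonalProjectionOnto f : H)‖ ≤ Real.sqrt ε * ‖f‖)
    (g : K) (hgdef : g = S1 f - S2 f)
    (hg : ‖g - (V.orthogonalProjectionOnto g : K)‖ ≤ Real.sqrt δ * ‖g‖) :
    ‖(V.subtypeL.comp V.orthogonalProjectionOnto).comp
        ((S1.toContinuousLinearMap - S2.toContinuousLinearMap).comp
          (U.subtypeL.comp U.orthogonalProjectionOnto))‖
      ≥ (1 - Real.sqrt δ) * ‖g‖ / ‖f‖ - 2 * Real.sqrt ε :=
  opNorm_proj_comp_sub_ge_general S1 S2 U V f hf0 ε δ hf g hgdef hg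
end
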